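/- arXiv:2509.14544 — 2 statements merged into one kernel-verified Lean document; each statement's English description precedes it below -/
import Mathlib

section
/- Let X ∈ ℝ^{n×d} and Z ∈ ℝ^{n×m} with m ≤ d, and suppose Zᵀ·X admits a factorization Zᵀ·X = U · diagonal(s) · Vᵀ, where U ∈ ℝ^{m×m} satisfies Uᵀ·U = I_m, V ∈ ℝ^{d×m} satisfies Vᵀ·V = I_m, and s ∈ ℝ^m has nonnegative entries. Then A* = U·Vᵀ satisfies A*·(A*)ᵀ = I_m and, for every A ∈ ℝ^{m×d} with A·Aᵀ = I_m, ‖X − Z·A*‖_F ≤ ‖X − Z·A‖_F. -/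
/-!
For row-orthonormal `A` we have `‖Z A‖_F² = tr(Zᵀ Z A Aᵀ) = ‖Z‖_F²`, so
`‖X - Z A‖_F² = ‖X‖_F² + ‖Z‖_F² - 2 tr(Aᵀ Zᵀ X)` and minimizing the distance means maximizing
`tr(Aᵀ Zᵀ X) = ∑ᵢ (Vᵀ Aᵀ U)ᵢᵢ sᵢ`. The matrices `V` and `Aᵀ U` have orthonormal columns, so by
Cauchy–Schwarz every diagonal entry of `Vᵀ (Aᵀ U)` is at most `1`; since `s ≥ 0` the trace is at
most `∑ᵢ sᵢ`, which is attained at `A = U Vᵀ`, where `Vᵀ Aᵀ U = 1`.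
-/

open Matrix

/-- Frobenius norm of a real matrix. -/
noncomputable def frobNorm {n d : ℕ} (M : Matrix (Fin n) (Fin d) ℝ) : ℝ :=
  Real.sqrt (∑ i, ∑ j, (M i j) ^ 2)

namespace Matrix

variable {k m n : Type*} [Fintype m] [Fintype n]

theorem sum_sq_eq_trace_transpose_mul {R : Type*} [CommSemiring R] (M : Matrix m n R) :
    ∑ i, ∑ j, M i j ^ 2 = (Mᵀ * M).trace := by
  simp only [trace, diag, mul_apply, transpose_apply, sq]
  exact Finset.sum_comm

theorem trace_transpose_mul_sub_mul_self_of_mul_transpose_eq_one {R : Type*} [CommRing R]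
    [Fintype k] [DecidableEq k] (X : Matrix m n R) (Z : Matrix m k R) {B : Matrix k n R}
    (hB : B * Bᵀ = 1) :
    ((X - Z * B)ᵀ * (X - Z * B)).trace
      = (Xᵀ * X).trace + (Zᵀ * Z).trace - 2 * (Bᵀ * (Zᵀ * X)).trace := by
  have hcross : (Xᵀ * (Z * B)).trace = (Bᵀ * (Zᵀ * X)).trace := by
    rw [← trace_transpose]
    simp only [transpose_mul, transpose_transpose, Matrix.mul_assoc]
  have hquad : (Bᵀ * Zᵀ * (Z * B)).trace = (Zᵀ * Z).trace := by
    rw [show Bᵀ * Zᵀ * (Z * B) = Bᵀ * (Zᵀ * Z * B) by simp only [Matrix.mul_assoc],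
      trace_mul_comm, Matrix.mul_assoc, hB, Matrix.mul_one]
  rw [transpose_sub, transpose_mul, Matrix.sub_mul, Matrix.mul_sub, Matrix.mul_sub, trace_sub,
    trace_sub, trace_sub, hcross, hquad, Matrix.mul_assoc Bᵀ Zᵀ X]
  ring

theorem trace_mul_mul_diagonal_mul {R : Type*} [CommSemiring R] [Fintype k] [DecidableEq k]
    (B : Matrix n m R) (U : Matrix m k R) (s : k → R) (W : Matrix k n R) :
    (B * (U * diagonal s * W)).trace = ∑ i, (W * B * U) i i * s i := by
  rw [← Matrix.mul_assoc, ← Matrix.mul_assoc, trace_mul_comm, ← Matrix.mul_assoc,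
    ← Matrix.mul_assoc]
  simp [trace, mul_diagonal]

theorem diag_transpose_mul_le_one [DecidableEq k] {P Q : Matrix n k ℝ}
    (hP : Pᵀ * P = 1) (hQ : Qᵀ * Q = 1) (i : k) : (Pᵀ * Q) i i ≤ 1 := by
  have hcol : ∀ {M : Matrix n k ℝ}, Mᵀ * M = 1 → ∑ j, M j i ^ 2 = 1 := fun hM => by
    simpa [mul_apply, sq] using congrFun (congrFun hM i) i
  have hcs := Finset.sum_mul_sq_le_sq_mul_sq Finset.univ (fun j => P j i) (fun j => Q j i)
  rw [hcol hP, hcol hQ, one_mul] at hcs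
  have hentry : (Pᵀ * Q) i i = ∑ j, P j i * Q j i := by simp [mul_apply]
  rw [hentry]
  exact le_of_abs_le ((sq_le_one_iff_abs_le_one _).mp hcs)

variable [Fintype k] [DecidableEq k] {U : Matrix k k ℝ} {V : Matrix n k ℝ}

theorem trace_transpose_mul_mul_diagonal_mul_le_sum {A : Matrix k n ℝ} (hA : A * Aᵀ = 1)
    (hU : Uᵀ * U = 1) (hV : Vᵀ * V = 1) {s : k → ℝ} (hs : ∀ i, 0 ≤ s i) :
    (Aᵀ * (U * diagonal s * Vᵀ)).trace ≤ ∑ i, s i := by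
  have hAU : (Aᵀ * U)ᵀ * (Aᵀ * U) = 1 := by
    rw [transpose_mul, transpose_transpose, Matrix.mul_assoc, ← Matrix.mul_assoc A, hA,
      Matrix.one_mul, hU]
  rw [trace_mul_mul_diagonal_mul]
  refine Finset.sum_le_sum fun i _ => mul_le_of_le_one_left (hs i) ?_
  rw [Matrix.mul_assoc]
  exact diag_transpose_mul_le_one hV hAU i

theorem trace_transpose_mul_mul_diagonal_mul_self (hU : Uᵀ * U = 1) (hV : Vᵀ * V = 1)
    (s : k → ℝ) : ((U * Vᵀ)ᵀ * (U * diagonal s * Vᵀ)).trace = ∑ i, s i := by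
  have hone : Vᵀ * (U * Vᵀ)ᵀ * U = 1 := by
    rw [transpose_mul, transpose_transpose, ← Matrix.mul_assoc, Matrix.mul_assoc _ Uᵀ, hU,
      Matrix.mul_one, hV]
  simp only [trace_mul_mul_diagonal_mul, hone, one_apply_eq, one_mul]

end Matrix

theorem procrustes_optimal_general {n d m : ℕ}
    (X : Matrix (Fin n) (Fin d) ℝ) (Z : Matrix (Fin n) (Fin m) ℝ)
    (U : Matrix (Fin m) (Fin m) ℝ) (V : Matrix (Fin d) (Fin m) ℝ) (s : Fin m → ℝ)
    (hU : Uᵀ * U = 1) (hV : Vᵀ * V = 1) (hs : ∀ i, 0 ≤ s i)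
    (hfact : Zᵀ * X = U * Matrix.diagonal s * Vᵀ) :
    (U * Vᵀ) * (U * Vᵀ)ᵀ = 1 ∧
    ∀ A : Matrix (Fin m) (Fin d) ℝ, A * Aᵀ = 1 →
      frobNorm (X - Z * (U * Vᵀ)) ≤ frobNorm (X - Z * A) := by
  have hUU : U * Uᵀ = 1 := mul_eq_one_comm.mp hU
  have hopt : (U * Vᵀ) * (U * Vᵀ)ᵀ = 1 := by
    rw [transpose_mul, transpose_transpose, Matrix.mul_assoc, ← Matrix.mul_assoc Vᵀ, hV,
      Matrix.one_mul, hUU]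
  refine ⟨hopt, fun A hA => Real.sqrt_le_sqrt ?_⟩
  rw [sum_sq_eq_trace_transpose_mul, sum_sq_eq_trace_transpose_mul,
    trace_transpose_mul_sub_mul_self_of_mul_transpose_eq_one X Z hopt,
    trace_transpose_mul_sub_mul_self_of_mul_transpose_eq_one X Z hA, hfact,
    trace_transpose_mul_mul_diagonal_mul_self hU hV]
  linarith [trace_transpose_mul_mul_diagonal_mul_le_sum hA hU hV hs]

/-- Closed-form solution of the orthogonal Procrustes problem:
if `Zᵀ * X = U * diagonal s * Vᵀ` with `Uᵀ * U = I`, `Vᵀ * V = I` and `s` nonnegative,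
then `A* = U * Vᵀ` is row-orthonormal and minimizes `‖X - Z * A‖_F` over all row-orthonormal `A`. -/
theorem procrustes_optimal {n d m : ℕ} (hmd : m ≤ d)
    (X : Matrix (Fin n) (Fin d) ℝ) (Z : Matrix (Fin n) (Fin m) ℝ)
    (U : Matrix (Fin m) (Fin m) ℝ) (V : Matrix (Fin d) (Fin m) ℝ) (s : Fin m → ℝ)
    (hU : Uᵀ * U = 1) (hV : Vᵀ * V = 1) (hs : ∀ i, 0 ≤ s i)
    (hfact : Zᵀ * X = U * Matrix.diagonal s * Vᵀ) :
    (U * Vᵀ) * (U * Vᵀ)ᵀ = 1 ∧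
    ∀ A : Matrix (Fin m) (Fin d) ℝ, A * Aᵀ = 1 →
      frobNorm (X - Z * (U * Vᵀ)) ≤ frobNorm (X - Z * A) :=
  procrustes_optimal_general X Z U V s hU hV hs hfact
end

section
/- Let s ∈ ℝ and ρ > 0, let φ(x) = (1 − e^{−x})/(1 + e^{−x}) with φ'(x) = 2·e^{−x}/(1 + e^{−x})², and define h(x) = (1/2)·(x − s)² + (1/ρ)·φ(x) and T(x) = max(s − φ'(x)/ρ, 0). Then for every x ≥ 0, h(T(x)) ≤ h(x); that is, one step of the difference-of-convex (CCCP) update does not increase the objective of the scalar ARMR proximal subproblem. -/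
/-!
Majorize–minimize: `φ` is concave on `[0, ∞)` because `φ'` is antitone there, so its tangent line
at `x` majorizes it on `[0, ∞)`. Replacing `φ` by that tangent turns `h` into a surrogate
`(y - c)² / 2 + const` with `c = s - φ'(x)/ρ`, which touches `h` at `x` and is minimized over
`[0, ∞)` at `T(x) = max c 0`; hence `h(T x) ≤ surrogate(T x) ≤ surrogate(x) = h(x)`.
-/

/-- The ARMR surrogate `φ(x) = (1 - e^{-x})/(1 + e^{-x})`. -/
noncomputable def phi (x : ℝ) : ℝ := (1 - Real.exp (-x)) / (1 + Real.exp (-x))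

/-- The derivative `φ'(x) = 2e^{-x}/(1 + e^{-x})²` of the ARMR surrogate. -/
noncomputable def phi' (x : ℝ) : ℝ := 2 * Real.exp (-x) / (1 + Real.exp (-x)) ^ 2

open Set

theorem ConcaveOn.le_add_mul_sub_of_hasDerivAt {S : Set ℝ} {f : ℝ → ℝ} {f' x y : ℝ}
    (hfc : ConcaveOn ℝ S f) (hx : x ∈ S) (hy : y ∈ S) (hf' : HasDerivAt f f' x) :
    f y ≤ f x + f' * (y - x) := by
  rcases lt_trichotomy x y with hxy | rfl | hyx
  · have h := hfc.slope_le_of_hasDerivAt hx hy hxy hf'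
    rw [slope_def_field, div_le_iff₀ (sub_pos.2 hxy)] at h
    linarith
  · simp
  · have h := hfc.le_slope_of_hasDerivAt hy hx hyx hf'
    rw [slope_def_field, le_div_iff₀ (sub_pos.2 hyx)] at h
    linarith

theorem sq_max_zero_sub_le {x : ℝ} (c : ℝ) (hx : 0 ≤ x) : (max c 0 - c) ^ 2 ≤ (x - c) ^ 2 := by
  rcases le_total 0 c with hc | hc
  · rw [max_eq_left hc, sub_self, sq, zero_mul]
    exact sq_nonneg _
  · rw [max_eq_right hc]
    nlinarith

noncomputable def proxObjective (f : ℝ → ℝ) (s ρ y : ℝ) : ℝ := 1 / 2 * (y - s) ^ 2 + (1 / ρ) * f y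

theorem ConcaveOn.proxObjective_max_le {f : ℝ → ℝ} {s ρ f' x : ℝ}
    (hfc : ConcaveOn ℝ (Ici 0) f) (hρ : 0 < ρ) (hx : 0 ≤ x) (hf' : HasDerivAt f f' x) :
    proxObjective f s ρ (max (s - f' / ρ) 0) ≤ proxObjective f s ρ x := by
  set c := s - f' / ρ
  set t := max c 0
  have tangent : f t ≤ f x + f' * (t - x) :=
    hfc.le_add_mul_sub_of_hasDerivAt hx (le_max_right c 0) hf'
  have surrogate (y : ℝ) :
      1 / 2 * (y - s) ^ 2 + (1 / ρ) * (f x + f' * (y - x)) =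
        1 / 2 * (y - c) ^ 2 + ((1 / ρ) * (f x - f' * x) + s * f' / ρ - (f' / ρ) ^ 2 / 2) := by
    simp only [c]
    field_simp
    ring
  calc proxObjective f s ρ t
      ≤ 1 / 2 * (t - s) ^ 2 + (1 / ρ) * (f x + f' * (t - x)) := by
        unfold proxObjective
        gcongr
    _ ≤ 1 / 2 * (x - s) ^ 2 + (1 / ρ) * (f x + f' * (x - x)) := by
        rw [surrogate, surrogate]
        gcongr 1 / 2 * ?_ + _
        exact sq_max_zero_sub_le c hx
    _ = proxObjective f s ρ x := by simp [proxObjective]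

theorem hasDerivAt_phi (x : ℝ) : HasDerivAt phi (phi' x) x := by
  have hexp : HasDerivAt (fun y => Real.exp (-y)) (-Real.exp (-x)) x := by
    simpa using (hasDerivAt_neg x).exp
  refine ((hexp.const_sub 1).div (hexp.const_add 1) (by positivity)).congr_deriv ?_
  unfold phi'
  field_simp
  ring

theorem antitoneOn_phi' : AntitoneOn phi' (Ici 0) := by
  intro a ha b _ hab
  have hu : 0 < Real.exp (-b) := Real.exp_pos _
  have huv : Real.exp (-b) ≤ Real.exp (-a) := Real.exp_le_exp.2 (neg_le_neg hab)
  have hv1 : Real.exp (-a) ≤ 1 := Real.exp_le_one_iff.2 (neg_nonpos.2 ha)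
  unfold phi'
  -- with `u = e^{-b} ≤ v = e^{-a} ≤ 1`, the claim is `(v - u) (1 - u v) ≥ 0`
  rw [div_le_div_iff₀ (by positivity) (by positivity)]
  nlinarith [mul_nonneg (sub_nonneg.2 huv) (sub_nonneg.2 (mul_le_one₀ hv1 hu.le (huv.trans hv1)))]

theorem concaveOn_phi : ConcaveOn ℝ (Ici 0) phi := by
  have hderiv : deriv phi = phi' := funext fun x => (hasDerivAt_phi x).deriv
  refine AntitoneOn.concaveOn_of_deriv (convex_Ici 0)
    (fun x _ => (hasDerivAt_phi x).continuousAt.continuousWithinAt)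
    (fun x _ => (hasDerivAt_phi x).differentiableAt.differentiableWithinAt) ?_
  rw [hderiv, interior_Ici]
  exact antitoneOn_phi'.mono Ioi_subset_Ici_self

/-- One CCCP step `T(x) = max (s - φ'(x)/ρ) 0` does not increase the objective
`h(x) = (1/2)(x - s)² + (1/ρ)φ(x)` of the scalar ARMR proximal subproblem on `[0, ∞)`. -/
theorem cccp_step_descent (s ρ : ℝ) (hρ : 0 < ρ) :
    ∀ x : ℝ, 0 ≤ x →
      1 / 2 * (max (s - phi' x / ρ) 0 - s) ^ 2 + (1 / ρ) * phi (max (s - phi' x / ρ) 0)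
        ≤ 1 / 2 * (x - s) ^ 2 + (1 / ρ) * phi x :=
  fun x hx => concaveOn_phi.proxObjective_max_le hρ hx (hasDerivAt_phi x)
end
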